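/- Let n ≥ 4 be even and let Φ_J = [[cos(π/n), sin(π/n), 0], [−sin(π/n), cos(π/n), 0], [0, 0, 1]] be the maximally entangled state of the bipartite n-gon model. There exist indices i, j, k, l ∈ {1,…,n} such that the dichotomic measurements M₁ = (e_i, e_{i+n/2}), M₂ = (e_k, e_{k+n/2}) for Alice and N₁ = (e_j, e_{j+n/2}), N₂ = (e_l, e_{l+n/2}) for Bob satisfy Hardy's conditions on Φ_J: e_iᵀ Φ_J e_l = 0, e_kᵀ Φ_J e_j = 0, e_{k+n/2}ᵀ Φ_J e_{l+n/2} = 0, and the success probability equals e_iᵀ Φ_J e_j = sin²(π/n) > 0. -/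

import Mathlib

open Real Matrix

/-- `r_n = sqrt(sec(π/n))`. -/
noncomputable def rpoly (n : ℕ) : ℝ := Real.sqrt (1 / Real.cos (Real.pi / n))

/-- Extremal effects of the even `n`-gon model:
`e_i = (1/2)·(r_n cos((2i−1)π/n), r_n sin((2i−1)π/n), 1)ᵀ`. -/
noncomputable def eEven (n i : ℕ) : Fin 3 → ℝ :=
  (1 / 2 : ℝ) •
    ![rpoly n * Real.cos ((2 * (i : ℝ) - 1) * Real.pi / n),
      rpoly n * Real.sin ((2 * (i : ℝ) - 1) * Real.pi / n), 1]

/-- The maximally entangled state of the bipartite even `n`-gon model: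
`Φ_J = [[cos(π/n), sin(π/n), 0], [−sin(π/n), cos(π/n), 0], [0,0,1]]`. -/
noncomputable def PhiJ (n : ℕ) : Matrix (Fin 3) (Fin 3) ℝ :=
  !![Real.cos (Real.pi / n), Real.sin (Real.pi / n), 0;
     -Real.sin (Real.pi / n), Real.cos (Real.pi / n), 0;
     0, 0, 1]

/-- Probability of local effects `E` (Alice) and `F` (Bob) on a bipartite state `Φ`:
`P_Φ(E,F) = Eᵀ Φ F`. -/
noncomputable def prob (Φ : Matrix (Fin 3) (Fin 3) ℝ) (E F : Fin 3 → ℝ) : ℝ :=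
  E ⬝ᵥ Φ.mulVec F

lemma prob_eq (n : ℕ) (hc : 0 < Real.cos (Real.pi / n)) (a b : ℕ) :
    prob (PhiJ n) (eEven n a) (eEven n b) =
      (Real.cos (((2 * (a : ℝ) - 1) * Real.pi / n - (2 * (b : ℝ) - 1) * Real.pi / n
          + Real.pi / n)) / Real.cos (Real.pi / n) + 1) / 4 := by
  have hr : rpoly n * rpoly n = 1 / Real.cos (Real.pi / n) :=
    Real.mul_self_sqrt (by positivity)
  have hcne : Real.cos (Real.pi / n) ≠ 0 := ne_of_gt hc
  simp only [prob, PhiJ, eEven, Matrix.mulVec, dotProduct, Fin.sum_univ_three,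
    Pi.smul_apply, smul_eq_mul, Matrix.cons_val_zero, Matrix.cons_val_one, Matrix.head_cons,
    Matrix.cons_val_two, Matrix.tail_cons, Matrix.cons_val', Matrix.empty_val',
    Matrix.cons_val_fin_one, Matrix.head_fin_const, Matrix.of_apply]
  rw [Real.cos_add, Real.cos_sub, Real.sin_sub]
  have hr2 : rpoly n ^ 2 = 1 / Real.cos (Real.pi / n) := by rw [sq]; exact hr
  ring_nf
  simp only [hr2]
  field_simp

lemma cos_pos_pi_div (n : ℕ) (hn : 4 ≤ n) : 0 < Real.cos (Real.pi / n) := by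
  apply Real.cos_pos_of_mem_Ioo
  have hn0 : (0:ℝ) < n := by positivity
  constructor
  · have : 0 ≤ Real.pi / n := by positivity
    linarith [Real.pi_pos, Real.pi_div_two_pos]
  · rw [div_lt_div_iff₀ hn0 two_pos]
    have h4 : (4:ℝ) ≤ n := by exact_mod_cast hn
    exact mul_lt_mul_of_pos_left (by linarith) Real.pi_pos

lemma prob_zero_case (n : ℕ) (hn : 4 ≤ n) (a b : ℕ)
    (h : (2 * (a : ℝ) - 1) * Real.pi / n - (2 * (b : ℝ) - 1) * Real.pi / n + Real.pi / n
        = Real.pi + Real.pi / n ∨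
      (2 * (a : ℝ) - 1) * Real.pi / n - (2 * (b : ℝ) - 1) * Real.pi / n + Real.pi / n
        = Real.pi - Real.pi / n) :
    prob (PhiJ n) (eEven n a) (eEven n b) = 0 := by
  have hc := cos_pos_pi_div n hn
  rw [prob_eq n hc a b]
  rcases h with h | h <;> rw [h]
  · rw [show Real.pi + Real.pi / n = Real.pi / n + Real.pi by ring, Real.cos_add_pi]
    field_simp
    norm_num
  · rw [Real.cos_pi_sub]
    field_simp
    norm_num

lemma prob_succ_case (n : ℕ) (hn : 4 ≤ n) (a b : ℕ)
    (h : (2 * (a : ℝ) - 1) * Real.pi / n - (2 * (b : ℝ) - 1) * Real.pi / n + Real.pi / n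
        = Real.pi + 3 * (Real.pi / n)) :
    prob (PhiJ n) (eEven n a) (eEven n b) = Real.sin (Real.pi / n) ^ 2 := by
  have hc := cos_pos_pi_div n hn
  have hcne := ne_of_gt hc
  rw [prob_eq n hc a b, h,
    show Real.pi + 3 * (Real.pi / n) = 3 * (Real.pi / n) + Real.pi by ring,
    Real.cos_add_pi, Real.cos_three_mul]
  have hs := Real.sin_sq_add_cos_sq (Real.pi / n)
  field_simp
  nlinarith [hs]

/-- for even `n ≥ 4` there exist indices `i, j, k, l ∈ {1,…,n}` such that
the measurements `M₁ = (e_i, e_{i+n/2})`, `M₂ = (e_k, e_{k+n/2})` (Alice) and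
`N₁ = (e_j, e_{j+n/2})`, `N₂ = (e_l, e_{l+n/2})` (Bob) satisfy Hardy's conditions on `Φ_J`
with success probability `sin²(π/n) > 0`. -/
theorem even_gon_max_entangled_hardy
    (n : ℕ) (hn : 4 ≤ n) (heven : Even n) :
    ∃ i ∈ Finset.Icc 1 n, ∃ j ∈ Finset.Icc 1 n, ∃ k ∈ Finset.Icc 1 n, ∃ l ∈ Finset.Icc 1 n,
      prob (PhiJ n) (eEven n i) (eEven n l) = 0 ∧
      prob (PhiJ n) (eEven n k) (eEven n j) = 0 ∧
      prob (PhiJ n) (eEven n (k + n / 2)) (eEven n (l + n / 2)) = 0 ∧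
      prob (PhiJ n) (eEven n i) (eEven n j) = Real.sin (Real.pi / n) ^ 2 ∧
      0 < Real.sin (Real.pi / n) ^ 2 := by
  obtain ⟨m, hm⟩ := heven
  have hm2 : 2 ≤ m := by omega
  have hnm : n = 2 * m := by omega
  have hhalf : n / 2 = m := by omega
  have hnR : (n : ℝ) = 2 * m := by exact_mod_cast congrArg Nat.cast hnm
  have hnne : (n : ℝ) ≠ 0 := by positivity
  have hpi := Real.pi_ne_zero
  -- i = m + 2, j = 1, k = m + 1, l = 2
  refine ⟨m + 2, by simp [Finset.mem_Icc]; omega, 1, by simp [Finset.mem_Icc]; omega,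
    m + 1, by simp [Finset.mem_Icc]; omega, 2, by simp [Finset.mem_Icc]; omega, ?_, ?_, ?_, ?_, ?_⟩
  · apply prob_zero_case n hn; left; push_cast; rw [hnR]; field_simp; ring
  · apply prob_zero_case n hn; left; push_cast; rw [hnR]; field_simp; ring
  · rw [hhalf]
    apply prob_zero_case n hn; right; push_cast; rw [hnR]; field_simp; ring
  · apply prob_succ_case n hn; push_cast; rw [hnR]; field_simp; ring
  · have h1 : 0 < Real.pi / n := by positivity
    have h2 : Real.pi / n < Real.pi := by
      rw [div_lt_iff₀ (by positivity : (0:ℝ) < n)]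
      have h4 : (4:ℝ) ≤ n := by exact_mod_cast hn
      calc Real.pi = Real.pi * 1 := by ring
        _ < Real.pi * n := mul_lt_mul_of_pos_left (by linarith) Real.pi_pos
    exact pow_pos (Real.sin_pos_of_pos_of_lt_pi h1 h2) 2
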